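/- Let Γ be a finite set of permutations each of which starts with 1. Then for every positive integer m, the following identity of formal power series in t over ℚ[y] holds: Σ_{n≥0} (t^n/n!)·Σ_{σ ∈ NM_n(Γ)} m^{LRmin(σ)} y^{1+des(σ)} = ( Σ_{n≥0} NM_{Γ,n}(y)·t^n/n! )^m, where the n = 0 term of the left-hand side is 1. Equivalently, NM_Γ(t,x,y) = (1/U_Γ(t,y))^x when x is specialized to a positive integer. -/

import Mathlib

open Polynomial

/-- The reduction of a list of distinct integers: replace the i-th smallest entry by i. -/
def redL (l : List ℕ) : List ℕ :=
  l.map (fun x => (l.countP (fun y => decide (y < x))) + 1)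

/-- The number of descents of a list. -/
def desL (l : List ℕ) : ℕ :=
  (l.zip l.tail).countP (fun p => decide (p.2 < p.1))

/-- `σ` has a `Γ`-match: some consecutive factor of length at least 2 reduces to a member of `Γ`. -/
def HasMatch (Γ : Set (List ℕ)) (l : List ℕ) : Prop :=
  ∃ i j : ℕ, 1 ≤ j ∧ i + j + 1 ≤ l.length ∧ redL ((l.drop i).take (j + 1)) ∈ Γ

open scoped Classical in
/-- The set of permutations of `{1,…,n}` (in one-line notation, as lists) with no `Γ`-match. -/
noncomputable def NMfinset (Γ : Set (List ℕ)) (n : ℕ) : Finset (List ℕ) :=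
  ((List.range' 1 n).permutations.toFinset).filter (fun l => ¬ HasMatch Γ l)

/-- `NM_{Γ,n}(y) = Σ_{σ ∈ NM_n(Γ)} y^{1+des(σ)}` for `n ≥ 1`, and `NM_{Γ,0}(y) = 1`. -/
noncomputable def NMpoly (Γ : Set (List ℕ)) (n : ℕ) : Polynomial ℚ :=
  if n = 0 then 1 else ∑ l ∈ NMfinset Γ n, X ^ (1 + desL l)

/-- The number of left-to-right minima of a list (positions whose entry is smaller than every
earlier entry). -/
def LRminL (l : List ℕ) : ℕ :=
  (List.range l.length).countP (fun j => decide (∀ i, i < j → l.getD j 0 < l.getD i 0))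

/-
Write `G_n` for the `m^{LRmin} y^{1+des}`-weighted sum over `NM_n(Γ)` and `B_k` for the
`y^{1+des}`-weighted sum over the members of `NM_k(Γ)` that start with `1`. Cut
`σ ∈ NM_{n+1}(Γ)` just before its entry `1`, `σ = P ++ 1 :: t`. Since every pattern in `Γ` starts
with its minimum, no occurrence straddles the cut, so `σ ↦ (P, 1 :: t)` is a bijection onto pairs
of `Γ`-avoiding arrangements of complementary sets, the left one inside `{2, …, n+1}`. The entry
`1` adds one left-to-right minimum and, when `P ≠ []`, one descent, so the weight factors; and an
order-preserving relabelling keeps avoidance, descents and left-to-right minima. Hence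
`G_{n+1} = m Σ_j C(n,j) G_j B_{n+1-j}`, i.e. `G' = G · m B'` for the exponential generating
functions. So the generating function for `m` and the `m`-th power of the one for `1` satisfy the
same linear differential equation `F' = F · m B'` with constant term `1`, and therefore coincide.
-/

lemma desL_cons_cons (a b : ℕ) (t : List ℕ) :
    desL (a :: b :: t) = desL (b :: t) + if b < a then 1 else 0 := by
  simp [desL, List.countP_cons]

lemma desL_append_cons (l t : List ℕ) (a : ℕ) :
    desL (l ++ a :: t) = desL (l ++ [a]) + desL (a :: t) := by
  induction l with
  | nil => simp [desL]
  | cons x l ih =>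
    cases l with
    | nil =>
      simp only [List.cons_append, List.nil_append, desL_cons_cons]
      simp only [desL, List.tail_cons, List.zip_nil_right, List.countP_nil]
      omega
    | cons y l =>
      simp only [List.cons_append] at ih ⊢
      rw [desL_cons_cons, desL_cons_cons, ih]
      omega

lemma desL_append_cons_of_lt {P t : List ℕ} {b : ℕ} (hne : P ≠ []) (hP : ∀ x ∈ P, b < x) :
    desL (P ++ b :: t) = desL P + desL (b :: t) + 1 := by
  obtain ⟨l, a, rfl⟩ := (List.eq_nil_or_concat' P).resolve_left hne
  have hba : b < a := hP a (by simp)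
  rw [List.append_assoc, List.singleton_append, desL_append_cons, List.append_cons l a,
    desL_cons_cons, if_pos hba]
  omega

lemma LRminL_concat (l : List ℕ) (a : ℕ) :
    LRminL (l ++ [a]) = LRminL l + if ∀ x ∈ l, a < x then 1 else 0 := by
  have hprefix : ∀ i < l.length, (l ++ [a]).getD i 0 = l.getD i 0 :=
    fun i hi => List.getD_append _ _ _ _ hi
  have hlast : (l ++ [a]).getD l.length 0 = a := by
    simp
  simp only [LRminL, List.length_append, List.length_singleton, List.range_succ,
    List.countP_append, List.countP_singleton, hlast]
  congr 1
  · refine List.countP_congr fun j hj => ?_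
    rw [List.mem_range] at hj
    simp only [decide_eq_true_eq]
    exact forall₂_congr fun i hi => by rw [hprefix j hj, hprefix i (hi.trans hj)]
  · congr 1
    simp only [decide_eq_true_eq]
    refine propext ⟨fun h x hx => ?_, fun h i hi => ?_⟩
    · obtain ⟨i, hi, rfl⟩ := List.getElem_of_mem hx
      have := h i hi
      rwa [hprefix i hi, List.getD_eq_getElem _ _ hi] at this
    · rw [hprefix i hi, List.getD_eq_getElem _ _ hi]
      exact h _ (List.getElem_mem hi)

lemma LRminL_append_cons {P t : List ℕ} {b : ℕ} (hP : ∀ x ∈ P, b < x) (ht : ∀ x ∈ t, b ≤ x) :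
    LRminL (P ++ b :: t) = LRminL P + 1 := by
  induction t using List.reverseRecOn with
  | nil => rw [LRminL_concat, if_pos hP]
  | append_singleton t c ih =>
    rw [← List.cons_append, ← List.append_assoc, LRminL_concat,
      ih fun x hx => ht x (by simp [hx]), if_neg]
    push Not
    exact ⟨b, by simp, ht c (by simp)⟩

section Relabel

variable {f : ℕ → ℕ} {l : List ℕ}

lemma redL_map (hf : StrictMonoOn f {x | x ∈ l}) : redL (l.map f) = redL l := by
  simp only [redL, List.map_map, List.countP_map]
  refine List.map_congr_left fun x hx => ?_
  simp only [Function.comp_apply]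
  congr 1
  exact List.countP_congr fun y hy => by simp [hf.lt_iff_lt hy hx]

lemma desL_map (hf : StrictMonoOn f {x | x ∈ l}) : desL (l.map f) = desL l := by
  rw [desL, ← List.map_tail, List.zip_map, List.countP_map, desL]
  refine List.countP_congr fun p hp => ?_
  have hmem := List.of_mem_zip hp
  simp [hf.lt_iff_lt (List.mem_of_mem_tail hmem.2) hmem.1]

lemma LRminL_map (hf : StrictMonoOn f {x | x ∈ l}) : LRminL (l.map f) = LRminL l := by
  induction l using List.reverseRecOn with
  | nil => rfl
  | append_singleton l a ih =>
    have ha : a ∈ l ++ [a] := by simp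
    rw [List.map_append, List.map_singleton, LRminL_concat, LRminL_concat,
      ih (hf.mono fun x (hx : x ∈ l) => by simp [hx])]
    congr 2
    simp only [List.forall_mem_map]
    exact propext <| forall₂_congr fun x hx => hf.lt_iff_lt ha (by simp [hx])

lemma hasMatch_map_iff {Γ : Set (List ℕ)} (hf : StrictMonoOn f {x | x ∈ l}) :
    HasMatch Γ (l.map f) ↔ HasMatch Γ l := by
  have hfactor : ∀ i j, redL (((l.map f).drop i).take j) = redL ((l.drop i).take j) :=
    fun i j => by
      rw [← List.map_drop, ← List.map_take]
      exact redL_map (hf.mono fun x hx => List.mem_of_mem_drop (List.mem_of_mem_take hx))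
  simp only [HasMatch, List.length_map, hfactor]

end Relabel

def StartsWithMin (l : List ℕ) : Prop :=
  ∀ a ∈ l.head?, ∀ x ∈ l, a ≤ x

lemma startsWithMin_map {f : ℕ → ℕ} {l : List ℕ} (hf : StrictMonoOn f {x | x ∈ l}) :
    StartsWithMin (l.map f) ↔ StartsWithMin l := by
  cases l with
  | nil => simp [StartsWithMin]
  | cons a l =>
    simp only [StartsWithMin, List.head?_map, List.head?_cons, Option.map_some,
      Option.mem_some_iff, forall_eq', List.forall_mem_map]
    exact forall₂_congr fun x hx => hf.le_iff_le (by simp) hx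

lemma startsWithMin_of_head_redL {l : List ℕ} (h : (redL l).head? = some 1) :
    StartsWithMin l := by
  cases l with
  | nil => simp [StartsWithMin]
  | cons a l =>
    simp only [redL, List.map_cons, List.head?_cons, Option.some.injEq, Nat.add_eq_right,
      List.countP_eq_zero, decide_eq_true_eq, not_lt] at h
    simpa [StartsWithMin] using h

section Matches

variable {Γ : Set (List ℕ)}

lemma HasMatch.of_take {l : List ℕ} {k : ℕ} (h : HasMatch Γ (l.take k)) : HasMatch Γ l := by
  obtain ⟨i, j, hj, hlen, hmem⟩ := h
  rw [List.length_take] at hlen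
  refine ⟨i, j, hj, by omega, ?_⟩
  rwa [List.drop_take, List.take_take, min_eq_left (by omega)] at hmem

lemma HasMatch.of_drop {l : List ℕ} {k : ℕ} (h : HasMatch Γ (l.drop k)) : HasMatch Γ l := by
  obtain ⟨i, j, hj, hlen, hmem⟩ := h
  rw [List.length_drop] at hlen
  exact ⟨k + i, j, hj, by omega, by rwa [List.drop_drop] at hmem⟩

/-- An occurrence straddling `b` would start with an entry of `P`, larger than `b`; but every
pattern starts with its minimum. -/
lemma not_hasMatch_append_cons (hΓ : ∀ τ ∈ Γ, τ.head? = some 1) {P t : List ℕ} {b : ℕ}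
    (hP : ∀ x ∈ P, b < x) (hnP : ¬ HasMatch Γ P) (hnB : ¬ HasMatch Γ (b :: t)) :
    ¬ HasMatch Γ (P ++ b :: t) := by
  rintro ⟨i, j, hj, hlen, hmem⟩
  rw [List.length_append] at hlen
  rcases le_or_gt P.length i with hi | hi
  · refine hnB ⟨i - P.length, j, hj, by omega, ?_⟩
    rwa [List.drop_append, List.drop_eq_nil_of_le hi, List.nil_append] at hmem
  rw [List.drop_append_of_le_length hi.le] at hmem
  rcases le_or_gt (i + j + 1) P.length with hij | hij
  · refine hnP ⟨i, j, hj, hij, ?_⟩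
    rwa [List.take_append_of_le_length (by simp; omega)] at hmem
  have hstart := startsWithMin_of_head_redL (hΓ _ hmem)
  rw [List.take_append, List.length_drop,
    show j + 1 - (P.length - i) = (j + i + 1 - P.length - 1) + 1 by omega,
    List.take_succ_cons] at hstart
  have hhead : P[i] ∈ (List.take (j + 1) (List.drop i P) ++
      b :: List.take (j + i + 1 - P.length - 1) t).head? := by
    simp [List.head?_append, List.head?_take, List.head?_drop, hi]
  exact absurd (hstart _ hhead b (by simp)) (not_le.mpr (hP _ (List.getElem_mem hi)))

end Matches

section Arrangements

variable {Γ : Set (List ℕ)}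

open scoped Classical in
noncomputable def NMOn (Γ : Set (List ℕ)) (s : Finset ℕ) : Finset (List ℕ) :=
  ((s.sort (· ≤ ·)).permutations.toFinset).filter (fun l => ¬ HasMatch Γ l)

lemma mem_NMOn {s : Finset ℕ} {l : List ℕ} :
    l ∈ NMOn Γ s ↔ (l : Multiset ℕ) = s.val ∧ ¬ HasMatch Γ l := by
  classical
  rw [NMOn, Finset.mem_filter, List.mem_toFinset, List.mem_permutations, ← Multiset.coe_eq_coe,
    Finset.sort_eq]

lemma NMfinset_eq_NMOn (n : ℕ) : NMfinset Γ n = NMOn Γ (Finset.Icc 1 n) := by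
  classical
  ext l
  rw [mem_NMOn, NMfinset, Finset.mem_filter, List.mem_toFinset, List.mem_permutations,
    ← Multiset.coe_eq_coe, Nat.Icc_eq_range', Nat.add_sub_cancel]

lemma mem_iff_of_mem_NMOn {s : Finset ℕ} {l : List ℕ} (hl : l ∈ NMOn Γ s) {x : ℕ} :
    x ∈ l ↔ x ∈ s := by
  rw [← Finset.mem_val, ← (mem_NMOn.mp hl).1, Multiset.mem_coe]

lemma map_mem_NMOn {f : ℕ → ℕ} {s : Finset ℕ} {l : List ℕ} (hf : StrictMonoOn f s)
    (hl : l ∈ NMOn Γ s) : l.map f ∈ NMOn Γ (s.image f) := by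
  obtain ⟨hls, hnm⟩ := mem_NMOn.mp hl
  have hfl : StrictMonoOn f {x | x ∈ l} := hf.mono fun x hx => (mem_iff_of_mem_NMOn hl).mp hx
  refine mem_NMOn.mpr ⟨?_, (hasMatch_map_iff hfl).not.mpr hnm⟩
  rw [Finset.image_val_of_injOn hf.injOn, ← hls, Multiset.map_coe]

def extendOrderIso {s t : Finset ℕ} (e : s ≃o t) (x : ℕ) : ℕ :=
  if h : x ∈ s then e ⟨x, h⟩ else 0

lemma extendOrderIso_of_mem {s t : Finset ℕ} (e : s ≃o t) {x : ℕ} (hx : x ∈ s) :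
    extendOrderIso e x = e ⟨x, hx⟩ :=
  dif_pos hx

lemma strictMonoOn_extendOrderIso {s t : Finset ℕ} (e : s ≃o t) :
    StrictMonoOn (extendOrderIso e) s := fun x hx y hy hxy => by
  rw [extendOrderIso_of_mem e hx, extendOrderIso_of_mem e hy]
  exact e.strictMono (Subtype.mk_lt_mk.mpr hxy)

lemma image_extendOrderIso {s t : Finset ℕ} (e : s ≃o t) : s.image (extendOrderIso e) = t := by
  ext y
  simp only [Finset.mem_image]
  refine ⟨fun ⟨x, hx, hxy⟩ => ?_, fun hy => ⟨e.symm ⟨y, hy⟩, (e.symm ⟨y, hy⟩).2, ?_⟩⟩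
  · rw [← hxy, extendOrderIso_of_mem e hx]
    exact (e ⟨x, hx⟩).2
  · rw [extendOrderIso_of_mem e (e.symm ⟨y, hy⟩).2]
    simp

lemma extendOrderIso_symm_apply {s t : Finset ℕ} (e : s ≃o t) {x : ℕ} (hx : x ∈ s) :
    extendOrderIso e.symm (extendOrderIso e x) = x := by
  rw [extendOrderIso_of_mem e hx, extendOrderIso_of_mem e.symm (e ⟨x, hx⟩).2]
  simp

lemma map_extendOrderIso_mem_NMOn {s t : Finset ℕ} (e : s ≃o t) {l : List ℕ}
    (hl : l ∈ NMOn Γ s) : l.map (extendOrderIso e) ∈ NMOn Γ t := by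
  simpa only [image_extendOrderIso] using map_mem_NMOn (strictMonoOn_extendOrderIso e) hl

lemma map_extendOrderIso_symm_map {s t : Finset ℕ} (e : s ≃o t) {l : List ℕ}
    (hl : l ∈ NMOn Γ s) : (l.map (extendOrderIso e)).map (extendOrderIso e.symm) = l := by
  rw [List.map_map]
  refine (List.map_congr_left fun x hx => ?_).trans (List.map_id l)
  exact extendOrderIso_symm_apply e ((mem_iff_of_mem_NMOn hl).mp hx)

lemma sum_NMOn_eq_of_card_eq {M : Type*} [AddCommMonoid M] {s t : Finset ℕ} (hst : s.card = t.card)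
    (F : List ℕ → M) (hF : ∀ l f, StrictMonoOn f {x | x ∈ l} → F (l.map f) = F l) :
    ∑ l ∈ NMOn Γ s, F l = ∑ l ∈ NMOn Γ t, F l := by
  let e : s ≃o t := (s.orderIsoOfFin rfl).symm.trans (t.orderIsoOfFin hst.symm)
  refine Finset.sum_nbij' (List.map (extendOrderIso e)) (List.map (extendOrderIso e.symm))
    (fun l hl => map_extendOrderIso_mem_NMOn e hl)
    (fun l hl => map_extendOrderIso_mem_NMOn e.symm hl)
    (fun l hl => map_extendOrderIso_symm_map e hl) (fun l hl => ?_) (fun l hl => ?_)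
  · simpa using map_extendOrderIso_symm_map e.symm hl
  · refine (hF l _ ((strictMonoOn_extendOrderIso e).mono fun x hx => ?_)).symm
    exact (mem_iff_of_mem_NMOn hl).mp hx

end Arrangements

section Splitting

variable {Γ : Set (List ℕ)}

lemma nodup_of_mem_NMOn {s : Finset ℕ} {l : List ℕ} (hl : l ∈ NMOn Γ s) : l.Nodup :=
  Multiset.coe_nodup.mp ((mem_NMOn.mp hl).1 ▸ s.nodup)

lemma take_mem_NMOn {s : Finset ℕ} {l : List ℕ} (hl : l ∈ NMOn Γ s) (k : ℕ) :
    l.take k ∈ NMOn Γ (l.take k).toFinset := by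
  classical
  refine mem_NMOn.mpr ⟨?_, fun h => (mem_NMOn.mp hl).2 h.of_take⟩
  rw [List.toFinset_val, ((nodup_of_mem_NMOn hl).sublist (List.take_sublist k l)).dedup]

lemma drop_mem_NMOn {s : Finset ℕ} {l : List ℕ} (hl : l ∈ NMOn Γ s) (k : ℕ) :
    l.drop k ∈ NMOn Γ (s \ (l.take k).toFinset) := by
  obtain ⟨hls, hnm⟩ := mem_NMOn.mp hl
  refine mem_NMOn.mpr ⟨?_, fun h => hnm h.of_drop⟩
  have hsplit : (l.take k : Multiset ℕ) + l.drop k = s.val := by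
    rw [Multiset.coe_add, List.take_append_drop, hls]
  rw [Finset.sdiff_val, ← hsplit, (mem_NMOn.mp (take_mem_NMOn hl k)).1, add_tsub_cancel_left]

lemma append_cons_mem_NMOn (hΓ : ∀ τ ∈ Γ, τ.head? = some 1) {s A : Finset ℕ} {P t : List ℕ}
    {b : ℕ} (hAs : A ⊆ s) (hbA : ∀ x ∈ A, b < x) (hP : P ∈ NMOn Γ A)
    (hB : b :: t ∈ NMOn Γ (s \ A)) : P ++ b :: t ∈ NMOn Γ s := by
  obtain ⟨hPA, hnP⟩ := mem_NMOn.mp hP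
  obtain ⟨hBA, hnB⟩ := mem_NMOn.mp hB
  refine mem_NMOn.mpr ⟨?_, not_hasMatch_append_cons hΓ (fun x hx => hbA x ?_) hnP hnB⟩
  · rw [← Multiset.coe_add, hPA, hBA, Finset.sdiff_val,
      add_tsub_cancel_of_le (Finset.val_le_iff.mpr hAs)]
  · exact (mem_iff_of_mem_NMOn hP).mp hx

/-- Cutting an arrangement of `{1, …, n + 1}` just before its entry `1`; the first component
records the entries to the left of the cut. -/
lemma sum_NMOn_Icc_succ {M : Type*} [AddCommMonoid M] (hΓ : ∀ τ ∈ Γ, τ.head? = some 1) (n : ℕ)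
    (F : List ℕ → M) :
    ∑ σ ∈ NMOn Γ (Finset.Icc 1 (n + 1)), F σ =
      ∑ p ∈ (Finset.Icc 2 (n + 1)).powerset.sigma fun A =>
          NMOn Γ A ×ˢ (NMOn Γ (Finset.Icc 1 (n + 1) \ A)).filter (·.head? = some 1),
        F (p.2.1 ++ p.2.2) := by
  classical
  refine Finset.sum_nbij' (fun σ => ⟨(σ.take (σ.idxOf 1)).toFinset, σ.take (σ.idxOf 1),
      σ.drop (σ.idxOf 1)⟩) (fun p => p.2.1 ++ p.2.2) (fun σ hσ => ?_) (fun p hp => ?_)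
    (fun σ _ => List.take_append_drop _ σ) (fun p hp => ?_) (fun σ _ => by simp)
  · set k := σ.idxOf 1
    have h1 : 1 ∈ σ := (mem_iff_of_mem_NMOn hσ).mpr (by simp)
    have hhead : (σ.drop k).head? = some 1 := by rw [List.head?_drop, List.getElem?_idxOf h1]
    have h1take : 1 ∉ σ.take k := fun h => List.disjoint_take_drop (nodup_of_mem_NMOn hσ) le_rfl
      h (List.mem_of_mem_head? hhead)
    simp only [Finset.mem_sigma, Finset.mem_powerset, Finset.mem_product, Finset.mem_filter]
    refine ⟨fun x hx => ?_, take_mem_NMOn hσ k, drop_mem_NMOn hσ k, hhead⟩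
    rw [List.mem_toFinset] at hx
    have hx1 : x ≠ 1 := by rintro rfl; exact h1take hx
    have := Finset.mem_Icc.mp ((mem_iff_of_mem_NMOn hσ).mp (List.mem_of_mem_take hx))
    exact Finset.mem_Icc.mpr (by omega)
  · obtain ⟨A, P, B⟩ := p
    simp only [Finset.mem_sigma, Finset.mem_powerset, Finset.mem_product,
      Finset.mem_filter] at hp
    obtain ⟨hA, hP, hB, hBhead⟩ := hp
    obtain ⟨t, rfl⟩ := List.head?_eq_some_iff.mp hBhead
    refine append_cons_mem_NMOn hΓ (hA.trans (Finset.Icc_subset_Icc (by omega) le_rfl))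
      (fun x hx => ?_) hP hB
    have := Finset.mem_Icc.mp (hA hx)
    omega
  · obtain ⟨A, P, B⟩ := p
    simp only [Finset.mem_sigma, Finset.mem_powerset, Finset.mem_product,
      Finset.mem_filter] at hp
    obtain ⟨hA, hP, hB, hBhead⟩ := hp
    obtain ⟨t, rfl⟩ := List.head?_eq_some_iff.mp hBhead
    have h1P : 1 ∉ P := fun h => by
      have := Finset.mem_Icc.mp (hA ((mem_iff_of_mem_NMOn hP).mp h))
      omega
    have hk : (P ++ 1 :: t).idxOf 1 = P.length := by
      rw [List.idxOf_append_of_notMem h1P, List.idxOf_cons_self, Nat.add_zero]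
    have hPA : P.toFinset = A := by
      rw [← Finset.val_inj, List.toFinset_val, (nodup_of_mem_NMOn hP).dedup, (mem_NMOn.mp hP).1]
    simp [hk, hPA]

end Splitting

section Recurrence

variable {Γ : Set (List ℕ)}

noncomputable def lrWeight (m : ℕ) (l : List ℕ) : ℚ[X] :=
  if l = [] then 1 else (m : ℚ[X]) ^ LRminL l * X ^ (1 + desL l)

lemma lrWeight_map {m : ℕ} {f : ℕ → ℕ} {l : List ℕ} (hf : StrictMonoOn f {x | x ∈ l}) :
    lrWeight m (l.map f) = lrWeight m l := by
  simp only [lrWeight, List.map_eq_nil_iff, LRminL_map hf, desL_map hf]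

lemma lrWeight_append_cons (m : ℕ) {P t : List ℕ} {b : ℕ} (hP : ∀ x ∈ P, b < x)
    (ht : ∀ x ∈ t, b ≤ x) :
    lrWeight m (P ++ b :: t) = (m : ℚ[X]) * lrWeight m P * X ^ (1 + desL (b :: t)) := by
  rw [lrWeight, if_neg (by simp), LRminL_append_cons hP ht]
  rcases eq_or_ne P [] with rfl | hne
  · simp [lrWeight, LRminL]
  · rw [lrWeight, if_neg hne, desL_append_cons_of_lt hne hP]
    ring

/-- `Σ_{σ ∈ NM_n(Γ)} m^{LRmin(σ)} y^{1+des(σ)}`; at `n = 0` the empty arrangement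
contributes `1`. -/
noncomputable def NMpolyLR (Γ : Set (List ℕ)) (m n : ℕ) : ℚ[X] :=
  ∑ σ ∈ NMOn Γ (Finset.Icc 1 n), lrWeight m σ

noncomputable def NMpolyHeadOne (Γ : Set (List ℕ)) (n : ℕ) : ℚ[X] :=
  ∑ σ ∈ (NMOn Γ (Finset.Icc 1 n)).filter (·.head? = some 1), X ^ (1 + desL σ)

lemma startsWithMin_iff_head?_eq {s : Finset ℕ} {l : List ℕ} {a : ℕ} (hl : l ∈ NMOn Γ s)
    (ha : IsLeast (s : Set ℕ) a) : StartsWithMin l ↔ l.head? = some a := by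
  have hal : a ∈ l := (mem_iff_of_mem_NMOn hl).mpr ha.1
  obtain ⟨b, t, rfl⟩ := List.exists_cons_of_ne_nil (List.ne_nil_of_mem hal)
  have hb : a ≤ b := ha.2 ((mem_iff_of_mem_NMOn hl).mp (by simp))
  simp only [StartsWithMin, List.head?_cons, Option.mem_some_iff, forall_eq', Option.some.injEq]
  refine ⟨fun h => le_antisymm (h a hal) hb, ?_⟩
  rintro rfl x hx
  exact ha.2 ((mem_iff_of_mem_NMOn hl).mp hx)

lemma sum_NMOn_filter_head?_eq {M : Type*} [AddCommMonoid M] {s t : Finset ℕ} {a b : ℕ}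
    (hst : s.card = t.card) (ha : IsLeast (s : Set ℕ) a) (hb : IsLeast (t : Set ℕ) b)
    (F : List ℕ → M) (hF : ∀ l f, StrictMonoOn f {x | x ∈ l} → F (l.map f) = F l) :
    ∑ l ∈ (NMOn Γ s).filter (·.head? = some a), F l =
      ∑ l ∈ (NMOn Γ t).filter (·.head? = some b), F l := by
  classical
  have hmin : ∀ (u : Finset ℕ) c, IsLeast (u : Set ℕ) c →
      ∑ l ∈ (NMOn Γ u).filter (·.head? = some c), F l =
        ∑ l ∈ NMOn Γ u, if StartsWithMin l then F l else 0 := fun u c hc => by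
    rw [Finset.sum_filter]
    exact Finset.sum_congr rfl fun l hl => by simp only [startsWithMin_iff_head?_eq hl hc]
  rw [hmin s a ha, hmin t b hb]
  refine sum_NMOn_eq_of_card_eq hst _ fun l f hf => ?_
  simp only [startsWithMin_map hf, hF l f hf]

lemma sum_lrWeight_append_eq (m : ℕ) {n : ℕ} {A : Finset ℕ}
    (hA : A ⊆ Finset.Icc 2 (n + 1)) :
    ∑ p ∈ NMOn Γ A ×ˢ (NMOn Γ (Finset.Icc 1 (n + 1) \ A)).filter (·.head? = some 1),
        lrWeight m (p.1 ++ p.2) =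
      (m : ℚ[X]) * NMpolyLR Γ m A.card * NMpolyHeadOne Γ (n + 1 - A.card) := by
  have hcard : (Finset.Icc 1 (n + 1) \ A).card = (Finset.Icc 1 (n + 1 - A.card)).card := by
    rw [Finset.card_sdiff_of_subset (hA.trans (Finset.Icc_subset_Icc (by omega) le_rfl))]
    simp
  have hAn : A.card ≤ n := by simpa using Finset.card_le_card hA
  have hleast : IsLeast (↑(Finset.Icc 1 (n + 1) \ A) : Set ℕ) 1 := by
    refine ⟨Finset.mem_sdiff.mpr ⟨Finset.mem_Icc.mpr ⟨le_rfl, by omega⟩, fun h => ?_⟩,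
      fun x hx => (Finset.mem_Icc.mp (Finset.mem_sdiff.mp hx).1).1⟩
    exact absurd (Finset.mem_Icc.mp (hA h)).1 (by omega)
  have hsplit : ∀ p ∈ NMOn Γ A ×ˢ (NMOn Γ (Finset.Icc 1 (n + 1) \ A)).filter (·.head? = some 1),
      lrWeight m (p.1 ++ p.2) = (m : ℚ[X]) * lrWeight m p.1 * X ^ (1 + desL p.2) := by
    rintro ⟨P, B⟩ hp
    simp only [Finset.mem_product, Finset.mem_filter] at hp
    obtain ⟨hP, hB, hBhead⟩ := hp
    obtain ⟨t, rfl⟩ := List.head?_eq_some_iff.mp hBhead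
    refine lrWeight_append_cons m (fun x hx => ?_) (fun x hx => ?_)
    · have := Finset.mem_Icc.mp (hA ((mem_iff_of_mem_NMOn hP).mp hx))
      omega
    · exact hleast.2 ((mem_iff_of_mem_NMOn hB).mp (List.mem_cons_of_mem 1 hx))
  have hLR : ∑ P ∈ NMOn Γ A, lrWeight m P = NMpolyLR Γ m A.card :=
    sum_NMOn_eq_of_card_eq (by simp) _ fun l f hf => lrWeight_map hf
  have hHeadOne : ∑ B ∈ (NMOn Γ (Finset.Icc 1 (n + 1) \ A)).filter (·.head? = some 1),
      (X : ℚ[X]) ^ (1 + desL B) = NMpolyHeadOne Γ (n + 1 - A.card) :=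
    sum_NMOn_filter_head?_eq hcard hleast
      ⟨Finset.mem_Icc.mpr ⟨le_rfl, by omega⟩, fun x hx => (Finset.mem_Icc.mp hx).1⟩ _
      fun l f hf => by rw [desL_map hf]
  rw [Finset.sum_congr rfl hsplit, Finset.sum_product, ← hLR, ← hHeadOne, mul_assoc,
    Finset.sum_mul_sum, Finset.mul_sum]
  simp only [Finset.mul_sum, mul_assoc]

lemma NMpolyLR_succ (hΓ : ∀ τ ∈ Γ, τ.head? = some 1) (m n : ℕ) :
    NMpolyLR Γ m (n + 1) = ∑ j ∈ Finset.range (n + 1),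
      n.choose j • (NMpolyLR Γ m j * ((m : ℚ[X]) * NMpolyHeadOne Γ (n - j + 1))) := by
  have hpowerset := Finset.sum_powerset_apply_card
    (fun k => (m : ℚ[X]) * NMpolyLR Γ m k * NMpolyHeadOne Γ (n + 1 - k)) (x := Finset.Icc 2 (n + 1))
  rw [Nat.card_Icc, show n + 1 + 1 - 2 = n by omega] at hpowerset
  rw [NMpolyLR, sum_NMOn_Icc_succ hΓ, Finset.sum_sigma, Finset.sum_congr rfl fun A hA =>
    sum_lrWeight_append_eq m (Finset.mem_powerset.mp hA), hpowerset]
  refine Finset.sum_congr rfl fun j hj => ?_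
  rw [show n + 1 - j = n - j + 1 by have := Finset.mem_range.mp hj; omega]
  ring

end Recurrence

open scoped PowerSeries

lemma PowerSeries.eq_of_derivative_eq_mul {R : Type*} [CommRing R] [IsAddTorsionFree R]
    {u f g : R⟦X⟧} (hf : d⁄dX R f = f * u) (hg : d⁄dX R g = g * u)
    (h0 : constantCoeff f = constantCoeff g) : f = g := by
  ext n
  induction n using Nat.strong_induction_on with
  | _ n ih =>
    cases n with
    | zero => simpa using h0
    | succ n =>
      have hder : coeff n (d⁄dX R f) = coeff n (d⁄dX R g) := by
        rw [hf, hg, coeff_mul, coeff_mul]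
        refine Finset.sum_congr rfl fun p hp => ?_
        rw [ih p.1 (by have := Finset.HasAntidiagonal.mem_antidiagonal.mp hp; omega)]
      rw [coeff_derivative, coeff_derivative, ← Nat.cast_succ, mul_comm, ← nsmul_eq_mul,
        mul_comm, ← nsmul_eq_mul] at hder
      exact IsAddTorsionFree.nsmul_right_injective (Nat.succ_ne_zero n) hder

section ExponentialGeneratingFunction

variable {A : Type*} [CommRing A] [Algebra ℚ A]

noncomputable def egf (a : ℕ → A) : A⟦X⟧ :=
  PowerSeries.mk fun n => (1 / (n.factorial : ℚ)) • a n

lemma coeff_egf (a : ℕ → A) (n : ℕ) :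
    PowerSeries.coeff n (egf a) = (1 / (n.factorial : ℚ)) • a n :=
  PowerSeries.coeff_mk _ _

lemma constantCoeff_egf (a : ℕ → A) : PowerSeries.constantCoeff (egf a) = a 0 := by
  rw [← PowerSeries.coeff_zero_eq_constantCoeff_apply, coeff_egf]
  simp

lemma derivative_egf (a : ℕ → A) : d⁄dX A (egf a) = egf fun n => a (n + 1) := by
  ext n
  rw [PowerSeries.coeff_derivative, coeff_egf, coeff_egf, ← Nat.cast_succ, smul_mul_assoc,
    mul_comm, ← nsmul_eq_mul, ← Nat.cast_smul_eq_nsmul ℚ, smul_smul, Nat.factorial_succ]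
  congr 1
  push_cast
  field_simp

lemma egf_mul (a b : ℕ → A) :
    egf a * egf b = egf fun n => ∑ k ∈ Finset.range (n + 1), n.choose k • (a k * b (n - k)) := by
  ext n
  rw [PowerSeries.coeff_mul, Finset.Nat.sum_antidiagonal_eq_sum_range_succ_mk, coeff_egf,
    Finset.smul_sum]
  refine Finset.sum_congr rfl fun k hk => ?_
  have hkn : k ≤ n := Nat.lt_succ_iff.mp (Finset.mem_range.mp hk)
  rw [coeff_egf, coeff_egf, smul_mul_smul_comm, ← Nat.cast_smul_eq_nsmul ℚ, smul_smul]
  congr 1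
  have hchoose : (n.choose k : ℚ) ≠ 0 := Nat.cast_ne_zero.mpr (Nat.choose_pos hkn).ne'
  rw [← Nat.choose_mul_factorial_mul_factorial hkn]
  push_cast
  field_simp

lemma egf_const_mul (c : A) (a : ℕ → A) : egf (fun n => c * a n) = PowerSeries.C c * egf a := by
  ext n
  rw [PowerSeries.coeff_C_mul, coeff_egf, coeff_egf, mul_smul_comm]

end ExponentialGeneratingFunction

section GeneratingFunction

variable {Γ : Set (List ℕ)}

lemma NMpolyLR_zero (m : ℕ) : NMpolyLR Γ m 0 = 1 := by
  have hempty : NMOn Γ (Finset.Icc 1 0) = {[]} := by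
    ext l
    simp +contextual [mem_NMOn, HasMatch]
  rw [NMpolyLR, hempty, Finset.sum_singleton, lrWeight, if_pos rfl]

lemma NMpolyLR_eq_sum_NMfinset (m : ℕ) {n : ℕ} (hn : n ≠ 0) :
    NMpolyLR Γ m n = ∑ σ ∈ NMfinset Γ n, (m : ℚ[X]) ^ LRminL σ * X ^ (1 + desL σ) := by
  rw [NMpolyLR, NMfinset_eq_NMOn]
  refine Finset.sum_congr rfl fun σ hσ => if_neg (List.ne_nil_of_mem (a := 1) ?_)
  exact (mem_iff_of_mem_NMOn hσ).mpr (Finset.mem_Icc.mpr ⟨le_rfl, Nat.one_le_iff_ne_zero.mpr hn⟩)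

lemma NMpoly_eq_NMpolyLR_one : NMpoly Γ = NMpolyLR Γ 1 := by
  funext n
  rcases eq_or_ne n 0 with rfl | hn
  · rw [NMpoly, if_pos rfl, NMpolyLR_zero]
  · simp [NMpoly, if_neg hn, NMpolyLR_eq_sum_NMfinset 1 hn]

lemma derivative_egf_NMpolyLR (hΓ : ∀ τ ∈ Γ, τ.head? = some 1) (m : ℕ) :
    d⁄dX ℚ[X] (egf (NMpolyLR Γ m)) =
      egf (NMpolyLR Γ m) * (PowerSeries.C (m : ℚ[X]) * d⁄dX ℚ[X] (egf (NMpolyHeadOne Γ))) := by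
  rw [derivative_egf, derivative_egf, ← egf_const_mul, egf_mul]
  exact congrArg egf (funext (NMpolyLR_succ hΓ m))

lemma egf_NMpolyLR_eq_pow (hΓ : ∀ τ ∈ Γ, τ.head? = some 1) (m : ℕ) :
    egf (NMpolyLR Γ m) = egf (NMpolyLR Γ 1) ^ m := by
  refine PowerSeries.eq_of_derivative_eq_mul (derivative_egf_NMpolyLR hΓ m) ?_ ?_
  · rw [PowerSeries.derivative_pow, derivative_egf_NMpolyLR hΓ 1]
    cases m with
    | zero => simp
    | succ m => simp [pow_succ]; ring
  · simp [constantCoeff_egf, NMpolyLR_zero]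

end GeneratingFunction

theorem stmt16_general (Γ : Set (List ℕ))
    (hΓ : ∀ τ ∈ Γ, τ.Perm (List.range' 1 τ.length) ∧ τ.head? = some 1)
    (m : ℕ) :
    PowerSeries.mk (fun n => if n = 0 then (1 : Polynomial ℚ) else
        (1 / (n.factorial : ℚ)) •
          ∑ σ ∈ NMfinset Γ n, (m : Polynomial ℚ) ^ LRminL σ * X ^ (1 + desL σ)) =
      (PowerSeries.mk fun n => (1 / (n.factorial : ℚ)) • NMpoly Γ n) ^ m := by
  change _ = egf (NMpoly Γ) ^ m
  rw [NMpoly_eq_NMpolyLR_one, ← egf_NMpolyLR_eq_pow (fun τ hτ => (hΓ τ hτ).2) m]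
  ext n
  rw [PowerSeries.coeff_mk, coeff_egf]
  rcases eq_or_ne n 0 with rfl | hn
  · simp [NMpolyLR_zero]
  · rw [if_neg hn, NMpolyLR_eq_sum_NMfinset m hn]

theorem stmt16 (Γ : Set (List ℕ)) (hfin : Γ.Finite)
    (hΓ : ∀ τ ∈ Γ, τ.Perm (List.range' 1 τ.length) ∧ τ.head? = some 1)
    (m : ℕ) (hm : 1 ≤ m) :
    PowerSeries.mk (fun n => if n = 0 then (1 : Polynomial ℚ) else
        (1 / (n.factorial : ℚ)) •
          ∑ σ ∈ NMfinset Γ n, (m : Polynomial ℚ) ^ LRminL σ * X ^ (1 + desL σ)) =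
      (PowerSeries.mk fun n => (1 / (n.factorial : ℚ)) • NMpoly Γ n) ^ m :=
  stmt16_general Γ hΓ m
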